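/- arXiv:1611.07396 — 5 statements merged into one kernel-verified Lean document; each statement's English description precedes it below -/
import Mathlib

section
/- Let R₁ and R₂ be commutative rings, M a module over R₁ × R₂, e₁ = (1,0), e₂ = (0,1), M₁ = e₁ • M and M₂ = e₂ • M. Then for every integer n ≥ 1, the canonical (R₁ × R₂)-linear map from the direct sum of the n-th exterior powers ⋀ⁿ_{R₁×R₂} M₁ ⊕ ⋀ⁿ_{R₁×R₂} M₂ to ⋀ⁿ_{R₁×R₂} M, induced by the inclusions M₁ ↪ M and M₂ ↪ M, is an isomorphism. -/
lemma aux_map_lsmul {R M : Type*} [CommRing R] [AddCommGroup M] [Module R M]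
    (e : R) (n : ℕ) {x : ExteriorAlgebra R M}
    (hx : x ∈ (LinearMap.range (ExteriorAlgebra.ι R : M →ₗ[R] _)) ^ n) :
    ExteriorAlgebra.map (LinearMap.lsmul R M e) x = e ^ n • x := by
  induction n generalizing x with
  | zero =>
    rw [pow_zero] at hx
    obtain ⟨r, rfl⟩ := Submodule.mem_one.1 hx
    simp [Algebra.algebraMap_eq_smul_one]
  | succ n ih =>
    rw [pow_succ'] at hx
    refine Submodule.mul_induction_on hx ?_ ?_
    · rintro m ⟨v, rfl⟩ y hy
      rw [map_mul, ExteriorAlgebra.map_apply_ι, ih hy, LinearMap.lsmul_apply,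
        map_smul, smul_mul_smul_comm, pow_succ']
    · intro a b ha hb
      rw [map_add, ha, hb, smul_add]

lemma aux_map_zero {R M N : Type*} [CommRing R] [AddCommGroup M] [Module R M]
    [AddCommGroup N] [Module R N] (n : ℕ) (hn : 1 ≤ n) {x : ExteriorAlgebra R M}
    (hx : x ∈ ⋀[R]^n M) :
    ExteriorAlgebra.map (0 : M →ₗ[R] N) x = 0 := by
  obtain ⟨k, rfl⟩ := Nat.exists_eq_add_of_le hn
  rw [show (⋀[R]^(1+k) M) = LinearMap.range (ExteriorAlgebra.ι R : M →ₗ[R] _) ^ (1+k) from rfl,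
    pow_add, pow_one] at hx
  refine Submodule.mul_induction_on hx ?_ ?_
  · rintro m ⟨v, rfl⟩ y _
    rw [map_mul, ExteriorAlgebra.map_apply_ι, LinearMap.zero_apply, map_zero, zero_mul]
  · intro a b ha hb
    rw [map_add, ha, hb, add_zero]

theorem map_mem_exteriorPower {R : Type*} [CommRing R] {M N : Type*}
    [AddCommGroup M] [Module R M] [AddCommGroup N] [Module R N]
    (f : M →ₗ[R] N) (n : ℕ) {x : ExteriorAlgebra R M} (hx : x ∈ ⋀[R]^n M) :
    ExteriorAlgebra.map f x ∈ ⋀[R]^n N := by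
  have h : Submodule.map (ExteriorAlgebra.map f).toLinearMap (⋀[R]^n M) ≤ ⋀[R]^n N := by
    rw [show (⋀[R]^n M) = LinearMap.range (ExteriorAlgebra.ι R : M →ₗ[R] _) ^ n from rfl,
      Submodule.map_pow]
    have h1 : Submodule.map (ExteriorAlgebra.map f).toLinearMap
        (LinearMap.range (ExteriorAlgebra.ι R : M →ₗ[R] ExteriorAlgebra R M))
        ≤ LinearMap.range (ExteriorAlgebra.ι R : N →ₗ[R] ExteriorAlgebra R N) := by
      rintro y hy
      rcases Submodule.mem_map.1 hy with ⟨z, hz, rfl⟩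
      rcases LinearMap.mem_range.1 hz with ⟨m, rfl⟩
      exact ⟨f m, (ExteriorAlgebra.map_apply_ι f m).symm⟩
    calc (Submodule.map (ExteriorAlgebra.map f).toLinearMap
            (LinearMap.range (ExteriorAlgebra.ι R : M →ₗ[R] ExteriorAlgebra R M))) ^ n
        ≤ (LinearMap.range (ExteriorAlgebra.ι R : N →ₗ[R] ExteriorAlgebra R N)) ^ n := by
          gcongr
      _ = ⋀[R]^n N := rfl
  exact h (Submodule.mem_map.2 ⟨x, hx, rfl⟩)

/-- The linear map `⋀[R]^n M →ₗ[R] ⋀[R]^n N` induced by a linear map `f : M →ₗ[R] N`. -/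
noncomputable def exteriorPowerMap {R : Type*} [CommRing R] {M N : Type*}
    [AddCommGroup M] [Module R M] [AddCommGroup N] [Module R N]
    (n : ℕ) (f : M →ₗ[R] N) : ⋀[R]^n M →ₗ[R] ⋀[R]^n N :=
  (ExteriorAlgebra.map f).toLinearMap.restrict fun _ hx => map_mem_exteriorPower f n hx

lemma exteriorPowerMap_coe {R : Type*} [CommRing R] {M N : Type*}
    [AddCommGroup M] [Module R M] [AddCommGroup N] [Module R N]
    (n : ℕ) (f : M →ₗ[R] N) (x : ⋀[R]^n M) :
    (exteriorPowerMap n f x : ExteriorAlgebra R N)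
      = ExteriorAlgebra.map f (x : ExteriorAlgebra R M) := rfl

lemma exteriorPowerMap_comp_apply {R : Type*} [CommRing R] {M N P : Type*}
    [AddCommGroup M] [Module R M] [AddCommGroup N] [Module R N]
    [AddCommGroup P] [Module R P]
    (n : ℕ) (f : N →ₗ[R] P) (g : M →ₗ[R] N) (x : ⋀[R]^n M) :
    exteriorPowerMap n f (exteriorPowerMap n g x) = exteriorPowerMap n (f ∘ₗ g) x := by
  apply Subtype.ext
  rw [exteriorPowerMap_coe, exteriorPowerMap_coe, exteriorPowerMap_coe,
    ← ExteriorAlgebra.map_comp_map]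
  rfl

lemma exteriorPowerMap_id {R : Type*} [CommRing R] {M : Type*}
    [AddCommGroup M] [Module R M] (n : ℕ) (x : ⋀[R]^n M) :
    exteriorPowerMap n (LinearMap.id (R := R) (M := M)) x = x := by
  apply Subtype.ext
  rw [exteriorPowerMap_coe, ExteriorAlgebra.map_id]
  rfl

lemma exteriorPowerMap_zero {R : Type*} [CommRing R] {M N : Type*}
    [AddCommGroup M] [Module R M] [AddCommGroup N] [Module R N]
    (n : ℕ) (hn : 1 ≤ n) (x : ⋀[R]^n M) :
    exteriorPowerMap n (0 : M →ₗ[R] N) x = 0 := by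
  apply Subtype.ext
  rw [exteriorPowerMap_coe, aux_map_zero n hn x.2]
  rfl

set_option maxHeartbeats 2000000 in
set_option synthInstance.maxHeartbeats 400000 in
/-- Let `R₁`, `R₂` be commutative rings, `M` a module over `R₁ × R₂`, `e₁ = (1,0)`,
`e₂ = (0,1)`, `M₁ = e₁ • M` and `M₂ = e₂ • M`.  For every `n ≥ 1`, the canonical
`(R₁ × R₂)`-linear map `⋀ⁿ M₁ ⊕ ⋀ⁿ M₂ → ⋀ⁿ M` induced by the inclusions is an
isomorphism. -/
theorem exteriorPower_of_product_ring_module_direct_sum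
    (R₁ R₂ : Type*) [CommRing R₁] [CommRing R₂]
    (M : Type*) [AddCommGroup M] [Module (R₁ × R₂) M] (n : ℕ) (hn : 1 ≤ n) :
    Function.Bijective
      (LinearMap.coprod
        (exteriorPowerMap n
          (LinearMap.range (LinearMap.lsmul (R₁ × R₂) M ((1 : R₁), (0 : R₂)))).subtype)
        (exteriorPowerMap n
          (LinearMap.range (LinearMap.lsmul (R₁ × R₂) M ((0 : R₁), (1 : R₂)))).subtype)) := by
  set e₁ : R₁ × R₂ := ((1 : R₁), (0 : R₂)) with he₁
  set e₂ : R₁ × R₂ := ((0 : R₁), (1 : R₂)) with he₂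
  set M₁ := LinearMap.range (LinearMap.lsmul (R₁ × R₂) M e₁) with hM₁
  set M₂ := LinearMap.range (LinearMap.lsmul (R₁ × R₂) M e₂) with hM₂
  -- projections
  let p₁ : M →ₗ[R₁ × R₂] M₁ :=
    (LinearMap.lsmul (R₁ × R₂) M e₁).codRestrict M₁ (fun m => ⟨m, rfl⟩)
  let p₂ : M →ₗ[R₁ × R₂] M₂ :=
    (LinearMap.lsmul (R₁ × R₂) M e₂).codRestrict M₂ (fun m => ⟨m, rfl⟩)
  let F := LinearMap.coprod (exteriorPowerMap n M₁.subtype) (exteriorPowerMap n M₂.subtype)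
  let G := (exteriorPowerMap n p₁).prod (exteriorPowerMap n p₂)
  have hidem₁ : e₁ * e₁ = e₁ := by simp [he₁]
  have hidem₂ : e₂ * e₂ = e₂ := by simp [he₂]
  have h21 : e₂ * e₁ = 0 := by simp [he₁, he₂]
  have h12 : e₁ * e₂ = 0 := by simp [he₁, he₂]
  -- compositions of the module maps
  have hp₁i₁ : p₁ ∘ₗ M₁.subtype = LinearMap.id := by
    ext ⟨m, m', hm'⟩
    show e₁ • m = m
    rw [← hm']
    show e₁ • e₁ • m' = e₁ • m'
    rw [smul_smul, hidem₁]
  have hp₂i₂ : p₂ ∘ₗ M₂.subtype = LinearMap.id := by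
    ext ⟨m, m', hm'⟩
    show e₂ • m = m
    rw [← hm']
    show e₂ • e₂ • m' = e₂ • m'
    rw [smul_smul, hidem₂]
  have hp₂i₁ : p₂ ∘ₗ M₁.subtype = 0 := by
    ext ⟨m, m', hm'⟩
    show e₂ • m = (0 : M)
    rw [← hm']
    show e₂ • e₁ • m' = 0
    rw [smul_smul, h21, zero_smul]
  have hp₁i₂ : p₁ ∘ₗ M₂.subtype = 0 := by
    ext ⟨m, m', hm'⟩
    show e₁ • m = (0 : M)
    rw [← hm']
    show e₁ • e₂ • m' = 0
    rw [smul_smul, h12, zero_smul]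
  have hleft : Function.LeftInverse G F := by
    rintro ⟨x, y⟩
    have hx : G (exteriorPowerMap n M₁.subtype x) = (x, 0) := by
      show (_, _) = (_, _)
      rw [exteriorPowerMap_comp_apply, exteriorPowerMap_comp_apply, hp₁i₁, hp₂i₁,
        exteriorPowerMap_id, exteriorPowerMap_zero n hn]
    have hy : G (exteriorPowerMap n M₂.subtype y) = (0, y) := by
      show (_, _) = (_, _)
      rw [exteriorPowerMap_comp_apply, exteriorPowerMap_comp_apply, hp₁i₂, hp₂i₂,
        exteriorPowerMap_id, exteriorPowerMap_zero n hn]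
    show G (exteriorPowerMap n M₁.subtype x + exteriorPowerMap n M₂.subtype y) = (x, y)
    rw [map_add, hx, hy, Prod.mk_add_mk, add_zero, zero_add]
  have hright : Function.RightInverse G F := by
    intro z
    show exteriorPowerMap n M₁.subtype (exteriorPowerMap n p₁ z)
        + exteriorPowerMap n M₂.subtype (exteriorPowerMap n p₂ z) = z
    apply Subtype.ext
    have hsub₁ : M₁.subtype ∘ₗ p₁ = LinearMap.lsmul (R₁ × R₂) M e₁ := rfl
    have hsub₂ : M₂.subtype ∘ₗ p₂ = LinearMap.lsmul (R₁ × R₂) M e₂ := rfl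
    have hz : (z : ExteriorAlgebra (R₁ × R₂) M)
        ∈ (LinearMap.range (ExteriorAlgebra.ι (R₁ × R₂) : M →ₗ[R₁ × R₂] _)) ^ n := z.2
    rw [Submodule.coe_add, exteriorPowerMap_comp_apply, exteriorPowerMap_comp_apply,
      hsub₁, hsub₂, exteriorPowerMap_coe, exteriorPowerMap_coe,
      aux_map_lsmul e₁ n hz, aux_map_lsmul e₂ n hz, ← add_smul]
    have : e₁ ^ n + e₂ ^ n = 1 := by
      have hne : n ≠ 0 := by omega
      apply Prod.ext <;> simp [he₁, he₂, zero_pow hne]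
    rw [this, one_smul]
  exact ⟨hleft.injective, hright.surjective⟩
end

section
/- Let p be a prime and f ≥ 1 an integer. Let C be an algebraically closed field equipped with a nonarchimedean additive valuation v : C → ℝ ∪ {+∞} (v(xy) = v(x) + v(y), v(x+y) ≥ min(v(x), v(y)), v(x) = +∞ iff x = 0) normalized by v(p) = 1, and let O_C = {x ∈ C : v(x) ≥ 0}. Let a ∈ O_C with v(a) < 1 − 1/p^f, and let x ∈ O_C satisfy v(x^{p^f} − a·x) ≥ 1. Then there exists a unique y ∈ O_C such that y^{p^f} = a·y and v(x − y) ≥ 1 − v(a). -/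
/-!
The solutions of `X ^ (n + 1) = a * X`, where `n = p ^ f - 1`, are `0` and the `n`-th roots of `a`;
the latter all have valuation `s = v a / n`. Since `v n = 0`, two distinct solutions differ by an
element of valuation at most `s`: for nonzero ones this is `v (ζ - 1) ≤ 0` for an `n`-th root of
unity `ζ ≠ 1`, which holds because `n = -∑_{i<n} (ζ ^ i - 1)` would otherwise have positive
valuation. Factor `x ^ (n + 1) - a * x = ∏ (x - y)` over the `n + 1` solutions. As
`v a < 1 - 1 / (n + 1)` means `(n + 1) * s < 1 ≤ v (∏ (x - y))`, some factor has `v (x - y) > s`;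
every other factor then has valuation at most `s`, so `v (x - y) ≥ 1 - n * s = 1 - v a`. Two
solutions that close to `x` would differ by an element of valuation at least `1 - v a > s`.
-/

open Polynomial

theorem WithTop.eq_coe_div_of_nsmul_eq_coe {α : Type*} [Field α] [CharZero α] {n : ℕ}
    (hn : n ≠ 0) {z : WithTop α} {t : α} (h : n • z = t) : z = ↑(t / n) := by
  induction z using WithTop.recTopCoe with
  | top =>
    obtain ⟨m, rfl⟩ := Nat.exists_eq_succ_of_ne_zero hn
    rw [succ_nsmul, WithTop.add_top] at h
    exact absurd h WithTop.top_ne_coe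
  | coe r =>
    rw [← WithTop.coe_nsmul, WithTop.coe_inj, nsmul_eq_mul] at h
    rw [WithTop.coe_inj, ← h, mul_div_cancel_left₀ _ (Nat.cast_ne_zero.mpr hn)]

theorem succ_mul_div_lt_one {α : Type*} [Field α] [LinearOrder α] [IsStrictOrderedRing α]
    {n : ℕ} (hn : n ≠ 0) {t : α} (ht : t < 1 - 1 / (n + 1)) : (n + 1) * (t / n) < 1 := by
  have hn : (0 : α) < n := by positivity
  rw [lt_sub_iff_add_lt, ← lt_sub_iff_add_lt', div_lt_iff₀ (by positivity)] at ht
  rw [mul_div_assoc', div_lt_one hn]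
  linarith

theorem eq_zero_or_pow_eq_of_pow_succ_eq_mul {M₀ : Type*} [MonoidWithZero M₀]
    [IsRightCancelMulZero M₀] {n : ℕ} {a y : M₀} (h : y ^ (n + 1) = a * y) : y = 0 ∨ y ^ n = a := by
  rw [pow_succ] at h
  exact (eq_or_ne y 0).imp_right fun hy => mul_right_cancel₀ hy h

theorem Polynomial.prod_nthRootsFinset_sub {K : Type*} [Field K] [IsAlgClosed K] {n : ℕ}
    (hn : (n : K) ≠ 0) {a : K} (ha : a ≠ 0) (x : K) :
    ∏ y ∈ nthRootsFinset n a, (x - y) = x ^ n - a := by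
  classical
  have hmonic : (X ^ n - C a).Monic := monic_X_pow_sub_C a (by rintro rfl; simp at hn)
  have hnodup : (nthRoots n a).Nodup := nodup_roots (separable_X_pow_sub_C a hn ha)
  rw [nthRootsFinset_def, Finset.prod_eq_multiset_prod, Multiset.toFinset_val, hnodup.dedup,
    nthRoots, ← (IsAlgClosed.splits _).eval_eq_prod_roots_of_monic hmonic]
  simp

theorem Polynomial.mem_insert_zero_nthRootsFinset {R : Type*} [CommRing R] [IsDomain R]
    [DecidableEq R] {n : ℕ} (hn : 0 < n) {a y : R} :
    y ∈ insert 0 (nthRootsFinset n a) ↔ y ^ (n + 1) = a * y := by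
  rw [Finset.mem_insert, mem_nthRootsFinset hn]
  refine ⟨?_, eq_zero_or_pow_eq_of_pow_succ_eq_mul⟩
  rintro (rfl | h)
  · simp
  · rw [pow_succ, h, mul_comm]

theorem Polynomial.prod_insert_zero_nthRootsFinset_sub {K : Type*} [Field K] [IsAlgClosed K]
    [DecidableEq K] {n : ℕ} (hn : (n : K) ≠ 0) {a : K} (ha : a ≠ 0) (x : K) :
    ∏ y ∈ insert 0 (nthRootsFinset n a), (x - y) = x ^ (n + 1) - a * x := by
  have hn_pos : 0 < n := Nat.pos_of_ne_zero (by rintro rfl; simp at hn)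
  rw [Finset.prod_insert (by simp [mem_nthRootsFinset hn_pos, zero_pow hn_pos.ne', ha.symm]),
    prod_nthRootsFinset_sub hn ha, sub_zero]
  ring

theorem Polynomial.card_insert_zero_nthRootsFinset_le {R : Type*} [CommRing R] [IsDomain R]
    [DecidableEq R] (n : ℕ) (a : R) : (insert 0 (nthRootsFinset n a)).card ≤ n + 1 := by
  refine (Finset.card_insert_le _ _).trans (Nat.succ_le_succ ?_)
  rw [nthRootsFinset_def]
  exact (Multiset.toFinset_card_le _).trans (card_nthRoots n a)

namespace AddValuation

section Ring

variable {R Γ : Type*} [Ring R] [LinearOrderedAddCommMonoidWithTop Γ] (v : AddValuation R Γ)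

theorem map_sub_one_le_map_pow_sub_one {ζ : R} (hζ : 0 ≤ v ζ) (n : ℕ) :
    v (ζ - 1) ≤ v (ζ ^ n - 1) := by
  induction n with
  | zero => simp
  | succ n ih =>
    have h : ζ ^ (n + 1) - 1 = ζ * (ζ ^ n - 1) + (ζ - 1) := by
      rw [pow_succ', mul_sub, mul_one, sub_add_sub_cancel]
    rw [h]
    refine v.map_le_add ?_ le_rfl
    rw [v.map_mul]
    exact ih.trans (le_add_of_nonneg_left hζ)

theorem map_sub_one_le_zero_of_pow_eq_one [IsDomain R] {n : ℕ} (hn : v (n : R) ≤ 0) {ζ : R}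
    (hζn : ζ ^ n = 1) (hζ : ζ ≠ 1) : v (ζ - 1) ≤ 0 := by
  by_contra! hpos
  have hvζ : v ζ = 0 := by
    have h := v.map_add_eq_of_lt_left (x := 1) (y := ζ - 1) (by rwa [v.map_one])
    rwa [add_sub_cancel, v.map_one] at h
  have hgeom : ∑ i ∈ Finset.range n, ζ ^ i = 0 := by
    have h := geom_sum_mul ζ n
    rw [hζn, sub_self] at h
    exact (mul_eq_zero.mp h).resolve_right (sub_ne_zero.mpr hζ)
  have hn_eq : (n : R) = -∑ i ∈ Finset.range n, (ζ ^ i - 1) := by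
    simp [Finset.sum_sub_distrib, hgeom]
  have : 0 < v (n : R) := by
    rw [hn_eq, v.map_neg]
    exact hpos.trans_le (v.map_le_sum fun i _ => v.map_sub_one_le_map_pow_sub_one hvζ.ge i)
  exact this.not_ge hn

end Ring

section CommRing

variable {R Γ : Type*} [CommRing R] [LinearOrderedAddCommMonoidWithTop Γ] (v : AddValuation R Γ)

theorem map_prod {ι : Type*} (s : Finset ι) (f : ι → R) :
    v (∏ i ∈ s, f i) = ∑ i ∈ s, v (f i) := by
  classical
  induction s using Finset.induction_on with
  | empty => simp
  | insert i s hi ih => rw [Finset.prod_insert hi, Finset.sum_insert hi, v.map_mul, ih]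

theorem exists_mem_map_prod_sub_le {S : Finset R} {s : Γ}
    (hS : ∀ y ∈ S, ∀ y' ∈ S, y ≠ y' → v (y - y') ≤ s) (x : R)
    (h : S.card • s < v (∏ y ∈ S, (x - y))) :
    ∃ y ∈ S, v (∏ y ∈ S, (x - y)) ≤ v (x - y) + (S.card - 1) • s := by
  classical
  rw [v.map_prod] at h ⊢
  obtain ⟨y, hy, hsy⟩ : ∃ y ∈ S, s < v (x - y) := by
    by_contra! hle
    exact (Finset.sum_le_card_nsmul S _ s hle).not_gt h
  refine ⟨y, hy, ?_⟩
  have hfar : ∀ y' ∈ S.erase y, v (x - y') ≤ s := by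
    intro y' hy'
    have hyy' := hS y hy y' (Finset.mem_of_mem_erase hy') (Finset.ne_of_mem_erase hy').symm
    rw [← sub_add_sub_cancel x y y', v.map_add_eq_of_lt_right (hyy'.trans_lt hsy)]
    exact hyy'
  rw [← Finset.add_sum_erase S _ hy, ← Finset.card_erase_of_mem hy]
  exact add_le_add le_rfl (Finset.sum_le_card_nsmul _ _ _ hfar)

theorem existsUnique_mem_le_map_sub_add_nsmul {S : Finset R} {s c : Γ} {n : ℕ}
    (hS : ∀ y ∈ S, ∀ y' ∈ S, y ≠ y' → v (y - y') ≤ s) (hcard : S.card ≤ n + 1) (hs : 0 ≤ s)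
    (hc : (n + 1) • s < c) {x : R} (hx : c ≤ v (∏ y ∈ S, (x - y))) :
    ∃! y, y ∈ S ∧ c ≤ v (x - y) + n • s := by
  obtain ⟨y, hy, hle⟩ := v.exists_mem_map_prod_sub_le hS x
    (((nsmul_le_nsmul_left hs hcard).trans_lt hc).trans_le hx)
  have hxy : c ≤ v (x - y) + n • s :=
    hx.trans (hle.trans (add_le_add le_rfl (nsmul_le_nsmul_left hs (by omega))))
  refine ⟨y, ⟨hy, hxy⟩, ?_⟩
  rintro y' ⟨hy', hxy'⟩
  by_contra hne
  have hclose : c ≤ v (y' - y) + n • s := by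
    calc c ≤ min (v (x - y) + n • s) (v (x - y') + n • s) := le_min hxy hxy'
      _ = min (v (x - y)) (v (x - y')) + n • s := min_add_add_right _ _ _
      _ ≤ v (y' - y) + n • s := by
        rw [← sub_sub_sub_cancel_left y y' x]
        exact add_le_add (v.map_sub _ _) le_rfl
  have := hclose.trans (add_le_add (hS y' hy' y hy hne) le_rfl)
  rw [← succ_nsmul'] at this
  exact (hc.trans_le this).false

end CommRing

section Field

variable {K Γ : Type*} [Field K] [LinearOrderedAddCommMonoidWithTop Γ] (v : AddValuation K Γ)

theorem map_sub_le_of_pow_eq_pow {n : ℕ} (hn : v (n : K) ≤ 0) {y y' : K} (h : y ^ n = y' ^ n)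
    (hne : y ≠ y') : v (y - y') ≤ v y := by
  rcases eq_or_ne y 0 with rfl | hy
  · simp
  have hζn : (y' / y) ^ n = 1 := by rw [div_pow, ← h, div_self (pow_ne_zero _ hy)]
  have hζ : y' / y ≠ 1 := fun h1 => hne ((div_eq_one_iff_eq hy).mp h1).symm
  have hfac : y - y' = y * -(y' / y - 1) := by field_simp; ring
  rw [hfac, v.map_mul, v.map_neg]
  exact add_le_of_nonpos_right (v.map_sub_one_le_zero_of_pow_eq_one hn hζn hζ)

theorem map_sub_le_of_pow_succ_eq_mul {n : ℕ} (hn : v (n : K) ≤ 0) {a : K} {s : Γ}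
    (hroot : ∀ y, y ^ n = a → v y = s) {y y' : K} (hy : y ^ (n + 1) = a * y)
    (hy' : y' ^ (n + 1) = a * y') (hne : y ≠ y') : v (y - y') ≤ s := by
  rcases eq_zero_or_pow_eq_of_pow_succ_eq_mul hy with rfl | hy <;>
    rcases eq_zero_or_pow_eq_of_pow_succ_eq_mul hy' with rfl | hy'
  · exact absurd rfl hne
  · rw [zero_sub, v.map_neg, hroot y' hy']
  · rw [sub_zero, hroot y hy]
  · exact (v.map_sub_le_of_pow_eq_pow hn (hy.trans hy'.symm) hne).trans (hroot y hy).le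

end Field

theorem existsUnique_pow_succ_eq_mul_near {K : Type*} [Field K] [IsAlgClosed K]
    (v : AddValuation K (WithTop ℝ)) {n : ℕ}
    (hn : v (n : K) ≤ 0) {a x : K} (ha0 : 0 ≤ v a)
    (ha : v a < ((1 - 1 / (n + 1) : ℝ) : WithTop ℝ))
    (hx : ((1 : ℝ) : WithTop ℝ) ≤ v (x ^ (n + 1) - a * x)) :
    ∃! y : K, 0 ≤ v y ∧ y ^ (n + 1) = a * y ∧ ((1 : ℝ) : WithTop ℝ) ≤ v (x - y) + v a := by
  classical
  have hn0 : (n : K) ≠ 0 := fun h => by simp [h] at hn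
  have hn_pos : 0 < n := Nat.pos_of_ne_zero (by rintro rfl; simp at hn0)
  have ha_ne : a ≠ 0 := by rintro rfl; simp at ha
  obtain ⟨t, ht⟩ := WithTop.ne_top_iff_exists.mp (ha.trans (WithTop.coe_lt_top _)).ne
  have hroot : ∀ y, y ^ n = a → v y = ↑(t / n) := fun y hy =>
    WithTop.eq_coe_div_of_nsmul_eq_coe hn_pos.ne' (by rw [← v.map_pow, hy, ht])
  rw [← ht, WithTop.coe_nonneg] at ha0
  rw [← ht, WithTop.coe_lt_coe] at ha
  have hs0 : (0 : WithTop ℝ) ≤ ↑(t / n) := WithTop.coe_nonneg.mpr (by positivity)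
  have hns : n • ((t / n : ℝ) : WithTop ℝ) = v a := by
    rw [← WithTop.coe_nsmul, nsmul_eq_mul, mul_div_cancel₀ _ (by positivity), ht]
  have hs_lt : (n + 1) • ((t / n : ℝ) : WithTop ℝ) < ((1 : ℝ) : WithTop ℝ) := by
    rw [← WithTop.coe_nsmul, WithTop.coe_lt_coe, nsmul_eq_mul, Nat.cast_succ]
    exact succ_mul_div_lt_one hn_pos.ne' ha
  have hmem (y : K) := mem_insert_zero_nthRootsFinset hn_pos (a := a) (y := y)
  have hsol := v.existsUnique_mem_le_map_sub_add_nsmul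
    (fun y hy y' hy' => v.map_sub_le_of_pow_succ_eq_mul hn hroot ((hmem y).1 hy) ((hmem y').1 hy'))
    (card_insert_zero_nthRootsFinset_le n a) hs0 hs_lt
    (by rwa [prod_insert_zero_nthRootsFinset_sub hn0 ha_ne x])
  simp only [hmem, hns] at hsol
  convert hsol using 2 with y
  refine ⟨fun h => h.2, fun h => ⟨?_, h⟩⟩
  rcases eq_zero_or_pow_eq_of_pow_succ_eq_mul h.1 with rfl | hy
  · simp
  · rwa [hroot y hy]

end AddValuation

theorem newton_approximation_unique_root_general
    (p f : ℕ) (hf : 1 ≤ f)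
    (C : Type*) [Field C] [IsAlgClosed C]
    (v : C → WithTop ℝ)
    (hv_mul : ∀ x y : C, v (x * y) = v x + v y)
    (hv_add : ∀ x y : C, min (v x) (v y) ≤ v (x + y))
    (hv_top : ∀ x : C, v x = ⊤ ↔ x = 0)
    (hv_p : v (p : C) = ((1 : ℝ) : WithTop ℝ))
    (a x : C)
    (ha0 : 0 ≤ v a) (ha : v a < (((1 - 1 / (p : ℝ) ^ f) : ℝ) : WithTop ℝ))
    (hx : ((1 : ℝ) : WithTop ℝ) ≤ v (x ^ p ^ f - a * x)) :
    ∃! y : C, 0 ≤ v y ∧ y ^ p ^ f = a * y ∧ ((1 : ℝ) : WithTop ℝ) ≤ v (x - y) + v a := by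
  have hv_one : v 1 = 0 := by
    refine (WithTop.add_right_cancel (mt (hv_top 1).1 one_ne_zero) ?_).symm
    rw [zero_add, ← hv_mul, one_mul]
  let w : AddValuation C (WithTop ℝ) := AddValuation.of v ((hv_top 0).2 rfl) hv_one hv_add hv_mul
  have hp : (p : C) ≠ 0 := fun h => by simp [h, (hv_top 0).2 rfl] at hv_p
  obtain ⟨n, hn⟩ : ∃ n, p ^ f = n + 1 :=
    Nat.exists_eq_add_one.mpr (pow_pos (Nat.pos_of_ne_zero (by rintro rfl; simp at hp)) f)
  have hvn : w (n : C) = 0 := by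
    have hn' : (n : C) = -1 + (p : C) ^ f := by rw [← Nat.cast_pow, hn]; push_cast; ring
    have hlt : w (-1) < w ((p : C) ^ f) := by
      rw [w.map_neg, w.map_one, w.map_pow, AddValuation.of_apply, hv_p, ← WithTop.coe_nsmul,
        WithTop.coe_pos, nsmul_one, Nat.cast_pos]
      omega
    rw [hn', w.map_add_eq_of_lt_left hlt, w.map_neg, w.map_one]
  have hpf : (p : ℝ) ^ f = n + 1 := by exact_mod_cast hn
  rw [hn] at hx ⊢
  rw [hpf] at ha
  exact w.existsUnique_pow_succ_eq_mul_near hvn.le ha0 ha hx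

/-- Newton approximation for `X^{p^f} = aX` over an algebraically closed
nonarchimedean valued field.  The valuation is additive, with values in
`ℝ ∪ {+∞}` (modeled as `WithTop ℝ`), normalized by `v p = 1`; `O_C` is the set of
elements of nonnegative valuation.  If `a ∈ O_C` with `v a < 1 − 1/p^f` and
`x ∈ O_C` satisfies `v (x^{p^f} − a·x) ≥ 1`, then there is a unique `y ∈ O_C` with
`y^{p^f} = a·y` and `v (x − y) ≥ 1 − v a` (stated as `v (x − y) + v a ≥ 1`, which
is equivalent since `v a` is a finite real number). -/
theorem newton_approximation_unique_root
    (p f : ℕ) (hp : p.Prime) (hf : 1 ≤ f)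
    (C : Type*) [Field C] [IsAlgClosed C]
    (v : C → WithTop ℝ)
    (hv_mul : ∀ x y : C, v (x * y) = v x + v y)
    (hv_add : ∀ x y : C, min (v x) (v y) ≤ v (x + y))
    (hv_top : ∀ x : C, v x = ⊤ ↔ x = 0)
    (hv_p : v (p : C) = ((1 : ℝ) : WithTop ℝ))
    (a x : C)
    (ha0 : 0 ≤ v a) (ha : v a < (((1 - 1 / (p : ℝ) ^ f) : ℝ) : WithTop ℝ))
    (hx0 : 0 ≤ v x)
    (hx : ((1 : ℝ) : WithTop ℝ) ≤ v (x ^ p ^ f - a * x)) :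
    ∃! y : C, 0 ≤ v y ∧ y ^ p ^ f = a * y ∧ ((1 : ℝ) : WithTop ℝ) ≤ v (x - y) + v a :=
  newton_approximation_unique_root_general p f hf C v hv_mul hv_add hv_top hv_p a x ha0 ha hx
end

section
/- Let p be a prime and f ≥ 1 an integer. Let K be a field equipped with a nonarchimedean additive valuation v : K → ℝ ∪ {+∞} (v(xy) = v(x) + v(y), v(x+y) ≥ min(v(x), v(y)), v(x) = +∞ iff x = 0) normalized by v(p) = 1. Let a, x ∈ K with v(a) ≥ 0, v(x) ≥ 0, v(a) < 1 − 1/p^f, and v(x^{p^f} − a·x) ≥ 1. Then either v(x) = v(a)/(p^f − 1) or v(x) ≥ 1 − v(a). -/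
/-- Valuation dichotomy for approximate solutions of `X^{p^f} = aX`.  The valuation
is additive with values in `ℝ ∪ {+∞}` (modeled as `WithTop ℝ`), normalized by
`v p = 1`.  If `v a ≥ 0`, `v x ≥ 0`, `v a < 1 − 1/p^f` and `v (x^{p^f} − a·x) ≥ 1`,
then either `v x = v a / (p^f − 1)` (stated as `(p^f − 1)·v x = v a`) or
`v x ≥ 1 − v a` (stated as `v x + v a ≥ 1`, equivalent since `v a` is a finite
real number). -/
theorem valuation_dichotomy_approximate_root
    (p f : ℕ) (hp : p.Prime) (hf : 1 ≤ f)
    (K : Type*) [Field K]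
    (v : K → WithTop ℝ)
    (hv_mul : ∀ x y : K, v (x * y) = v x + v y)
    (hv_add : ∀ x y : K, min (v x) (v y) ≤ v (x + y))
    (hv_top : ∀ x : K, v x = ⊤ ↔ x = 0)
    (hv_p : v (p : K) = ((1 : ℝ) : WithTop ℝ))
    (a x : K)
    (ha0 : 0 ≤ v a) (hx0 : 0 ≤ v x)
    (ha : v a < (((1 - 1 / (p : ℝ) ^ f) : ℝ) : WithTop ℝ))
    (hx : ((1 : ℝ) : WithTop ℝ) ≤ v (x ^ p ^ f - a * x)) :
    ((((p : ℝ) ^ f - 1 : ℝ) : WithTop ℝ) * v x = v a) ∨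
      ((1 : ℝ) : WithTop ℝ) ≤ v x + v a := by
  by_cases hxz : x = 0
  · right
    have : v x = ⊤ := (hv_top x).mpr hxz
    rw [this, top_add]
    exact le_top
  -- x ≠ 0, so v x is a real number
  have h1 : v (1 : K) = 0 := by
    have h := hv_mul 1 1
    rw [mul_one] at h
    have hne : v (1 : K) ≠ ⊤ := fun h' => one_ne_zero ((hv_top 1).mp h')
    rcases WithTop.ne_top_iff_exists.mp hne with ⟨r, hr⟩
    rw [← hr] at h ⊢
    have : r = r + r := by exact_mod_cast h
    have : r = 0 := by linarith
    simp [this]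
  have hneg : ∀ y : K, v (-y) = v y := by
    intro y
    have hm1 : v (-1 : K) = 0 := by
      have h := hv_mul (-1) (-1)
      rw [neg_mul_neg, one_mul, h1] at h
      have hne : v (-1 : K) ≠ ⊤ := fun h' => by
        have := (hv_top (-1)).mp h'; simp at this
      rcases WithTop.ne_top_iff_exists.mp hne with ⟨r, hr⟩
      rw [← hr] at h ⊢
      have : (0 : ℝ) = r + r := by exact_mod_cast h
      have : r = 0 := by linarith
      simp [this]
    have := hv_mul (-1) y
    rw [neg_one_mul, hm1, zero_add] at this
    exact this
  have key : ∀ u t : K, v u < v t → v (u + t) = v u := by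
    intro u t h
    refine le_antisymm ?_ ?_
    · have h2 := hv_add (u + t) (-t)
      rw [add_neg_cancel_right, hneg] at h2
      rcases min_le_iff.mp h2 with h3 | h3
      · exact h3
      · exact absurd h3 (not_le.mpr h)
    · have h2 := hv_add u t
      rwa [min_eq_left h.le] at h2
  have hmin : ∀ u t : K, v u ≠ v t → v (u - t) = min (v u) (v t) := by
    intro u t h
    rcases lt_or_gt_of_ne h with hlt | hlt
    · rw [sub_eq_add_neg, min_eq_left hlt.le]
      have : v (-t) = v t := hneg t
      rw [key u (-t) (by rwa [this])]
    · rw [min_eq_right hlt.le]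
      have heq : v (u - t) = v (t - u) := by
        rw [← hneg (u - t), neg_sub]
      rw [heq, sub_eq_add_neg, key t (-u) (by rwa [hneg])]
  have hxne : v x ≠ ⊤ := fun h' => hxz ((hv_top x).mp h')
  rcases WithTop.ne_top_iff_exists.mp hxne with ⟨r, hr⟩
  have hpow : ∀ n : ℕ, v (x ^ n) = (((n : ℝ) * r : ℝ) : WithTop ℝ) := by
    intro n
    induction n with
    | zero => simp [h1]
    | succ k ih =>
      rw [pow_succ, hv_mul, ih, ← hr, ← WithTop.coe_add]
      congr 1
      push_cast
      ring
  have hax : v (a * x) = v a + (r : WithTop ℝ) := by rw [hv_mul, hr]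
  by_cases hcase : v (x ^ p ^ f) = v (a * x)
  · left
    rw [hpow, hax] at hcase
    have hane : v a ≠ ⊤ := by
      intro h'
      rw [h', top_add] at hcase
      exact WithTop.coe_ne_top hcase
    rcases WithTop.ne_top_iff_exists.mp hane with ⟨s, hs⟩
    rw [← hs] at hcase ⊢
    rw [← WithTop.coe_add] at hcase
    have hcase' : ((p ^ f : ℕ) : ℝ) * r = s + r := by exact_mod_cast hcase
    rw [← hr, ← WithTop.coe_mul, WithTop.coe_eq_coe]
    push_cast at hcase' ⊢
    linarith
  · right
    have h2 := hmin (x ^ p ^ f) (a * x) hcase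
    rw [h2] at hx
    have h3 : ((1 : ℝ) : WithTop ℝ) ≤ v (a * x) :=
      le_trans hx (min_le_right _ _)
    rw [hv_mul] at h3
    rwa [add_comm] at h3
end

section
/- Let p be a prime and f ≥ 1 an integer. Let K be a field equipped with a nonarchimedean additive valuation v : K → ℝ ∪ {+∞} (v(xy) = v(x) + v(y), v(x+y) ≥ min(v(x), v(y)), v(x) = +∞ iff x = 0) normalized by v(p) = 1. Let a, x ∈ K with v(a) ≥ 0, v(x) ≥ 0, v(a) ≥ 1 − 1/p^f, and v(x^{p^f} − a·x) ≥ 1. Then v(x) ≥ 1/p^f. -/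
/-!
Write `q = p ^ f` and suppose `v x = t < 1 / q`. Then `v (x ^ q) = q t < 1 ≤ v (x ^ q - a x)`,
while `v (a x) ≥ 1 - 1 / q + t > q t` because `(q - 1) t < (q - 1) / q`. Since
`x ^ q = (x ^ q - a x) + a x`, the ultrametric inequality forces `v (x ^ q) > q t`,
a contradiction.
-/

namespace AddValuation

variable {R : Type*} [Ring R]

noncomputable def ofMulAddTop [Nontrivial R] (v : R → WithTop ℝ) (hv_mul : ∀ x y : R, v (x * y) = v x + v y)
    (hv_add : ∀ x y : R, min (v x) (v y) ≤ v (x + y)) (hv_top : ∀ x : R, v x = ⊤ ↔ x = 0) :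
    AddValuation R (WithTop ℝ) :=
  AddValuation.of v ((hv_top 0).mpr rfl)
    (by
      obtain ⟨r, hr⟩ := WithTop.ne_top_iff_exists.mp (mt (hv_top 1).mp one_ne_zero)
      have hrr : ((r + r : ℝ) : WithTop ℝ) = r := by rw [WithTop.coe_add, hr, ← hv_mul, one_mul]
      rw [← hr, WithTop.coe_eq_zero]
      linarith [WithTop.coe_inj.mp hrr])
    hv_add hv_mul

theorem one_div_le_of_one_le_pow_sub_mul (v : AddValuation R (WithTop ℝ)) {n : ℕ} (hn : 1 < n)
    {a x : R} (ha : (((1 - 1 / (n : ℝ)) : ℝ) : WithTop ℝ) ≤ v a)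
    (hx : ((1 : ℝ) : WithTop ℝ) ≤ v (x ^ n - a * x)) :
    (((1 / (n : ℝ)) : ℝ) : WithTop ℝ) ≤ v x := by
  by_contra! hlt
  obtain ⟨t, ht⟩ := WithTop.ne_top_iff_exists.mp (hlt.trans (WithTop.coe_lt_top _)).ne
  rw [← ht, WithTop.coe_lt_coe] at hlt
  have hn' : (1 : ℝ) < n := by exact_mod_cast hn
  have hnt : n * t < 1 := by rwa [lt_div_iff₀' (by linarith)] at hlt
  have hnt' : n * t < 1 - 1 / n + t := by
    have h := mul_lt_mul_of_pos_left hlt (sub_pos.mpr hn')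
    field_simp at h ⊢
    linarith
  have hpow : v (x ^ n) = ((n * t : ℝ) : WithTop ℝ) := by
    rw [v.map_pow, ← ht, ← WithTop.coe_nsmul, nsmul_eq_mul]
  have hsub : ((n * t : ℝ) : WithTop ℝ) < v (x ^ n - a * x) :=
    (WithTop.coe_lt_coe.mpr hnt).trans_le hx
  have hmul : ((n * t : ℝ) : WithTop ℝ) < v (a * x) := by
    rw [v.map_mul, ← ht]
    calc ((n * t : ℝ) : WithTop ℝ) < ((1 - 1 / n + t : ℝ) : WithTop ℝ) := WithTop.coe_lt_coe.mpr hnt'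
      _ = ((1 - 1 / n : ℝ) : WithTop ℝ) + t := WithTop.coe_add _ _
      _ ≤ v a + t := add_le_add_left ha _
  have hultra := v.map_add (x ^ n - a * x) (a * x)
  rw [sub_add_cancel, hpow] at hultra
  exact (lt_min hsub hmul).not_ge hultra

end AddValuation

theorem valuation_lower_bound_large_hasse_general
    (p f : ℕ) (hp : p.Prime) (hf : 1 ≤ f)
    (K : Type*) [Field K]
    (v : K → WithTop ℝ)
    (hv_mul : ∀ x y : K, v (x * y) = v x + v y)
    (hv_add : ∀ x y : K, min (v x) (v y) ≤ v (x + y))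
    (hv_top : ∀ x : K, v x = ⊤ ↔ x = 0)
    (a x : K)
    (ha : (((1 - 1 / (p : ℝ) ^ f) : ℝ) : WithTop ℝ) ≤ v a)
    (hx : ((1 : ℝ) : WithTop ℝ) ≤ v (x ^ p ^ f - a * x)) :
    (((1 / (p : ℝ) ^ f) : ℝ) : WithTop ℝ) ≤ v x := by
  have hq : 1 < p ^ f := Nat.one_lt_pow (by omega) hp.one_lt
  have h := (AddValuation.ofMulAddTop v hv_mul hv_add hv_top).one_div_le_of_one_le_pow_sub_mul hq
    (a := a) (x := x)
  push_cast at h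
  exact h ha hx

/-- Second branch of the case analysis: if the additive valuation (values in
`ℝ ∪ {+∞}`, modeled as `WithTop ℝ`, normalized by `v p = 1`) satisfies `v a ≥ 0`,
`v x ≥ 0`, `v a ≥ 1 − 1/p^f` and `v (x^{p^f} − a·x) ≥ 1`, then `v x ≥ 1/p^f`. -/
theorem valuation_lower_bound_large_hasse
    (p f : ℕ) (hp : p.Prime) (hf : 1 ≤ f)
    (K : Type*) [Field K]
    (v : K → WithTop ℝ)
    (hv_mul : ∀ x y : K, v (x * y) = v x + v y)
    (hv_add : ∀ x y : K, min (v x) (v y) ≤ v (x + y))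
    (hv_top : ∀ x : K, v x = ⊤ ↔ x = 0)
    (hv_p : v (p : K) = ((1 : ℝ) : WithTop ℝ))
    (a x : K)
    (ha0 : 0 ≤ v a) (hx0 : 0 ≤ v x)
    (ha : (((1 - 1 / (p : ℝ) ^ f) : ℝ) : WithTop ℝ) ≤ v a)
    (hx : ((1 : ℝ) : WithTop ℝ) ≤ v (x ^ p ^ f - a * x)) :
    (((1 / (p : ℝ) ^ f) : ℝ) : WithTop ℝ) ≤ v x :=
  valuation_lower_bound_large_hasse_general p f hp hf K v hv_mul hv_add hv_top a x ha hx
end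

section
/- Let A be a commutative ring equipped with a descending filtration by ideals (Fil^i A)_{i ∈ ℤ} such that Fil^i A = A for all i ≤ 0 and Fil^i A · Fil^j A ⊆ Fil^{i+j} A for all i, j. Let E be an A-module and V, W ⊆ E submodules with V + W = E and W generated by q' elements. For i ∈ ℤ define Fil^i E = (Fil^{i+1} A)•V + (Fil^i A)•W (so Fil^i E = E for i ≤ −1). Let q > q' be a positive integer, let Λ = ⋀^q_A E be the q-th exterior power, and for s ∈ ℤ let Fil^s Λ ⊆ Λ be the submodule generated by all wedges v₁ ∧ ⋯ ∧ v_q with v_k ∈ Fil^{i_k} E for some integers i₁, …, i_q satisfying i₁ + ⋯ + i_q = s. Then for every integer s with q' − q < s ≤ 0 one has Fil^s Λ = Σ_{j = s+q−q'}^{s+q} (Fil^j A) • Fil^{s−j} Λ. -/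
/-!
`Fil^i E` is spanned by the products `a • x` with either `a ∈ Fil^{i+1} A`, `x ∈ V`, or
`a ∈ Fil^i A` and `x` one of the generators `w m` of `W`. By multilinearity a generating wedge of
`Fil^s Λ` is a combination of wedges `(∏ a_k) • (x_1 ∧ ⋯ ∧ x_q)` of such products. If more than
`q'` of the `x_k` are generators of `W`, two of them coincide and the wedge vanishes. Otherwise,
if `S` is the set of slots with `x_k ∈ V`, then `∏ a_k ∈ Fil^{s+|S|} A`, and
`x_1 ∧ ⋯ ∧ x_q ∈ Fil^{-|S|} Λ` because `V ⊆ Fil^{-1} E` and `W ⊆ Fil^0 E`; here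
`q - q' ≤ |S| ≤ q`. The reverse inclusion is multiplicativity of the filtration in one slot.
-/

open Finset Function

namespace MultilinearMap

variable {R ι M₂ : Type*} {M₁ : ι → Type*} [Semiring R] [∀ i, AddCommMonoid (M₁ i)]
  [AddCommMonoid M₂] [∀ i, Module R (M₁ i)] [Module R M₂]

theorem map_mem_of_forall_mem_span [Finite ι] (f : MultilinearMap R M₁ M₂)
    (S : ∀ i, Set (M₁ i)) (P : Submodule R M₂) (h : ∀ u : ∀ i, M₁ i, (∀ i, u i ∈ S i) → f u ∈ P)
    (v : ∀ i, M₁ i) (hv : ∀ i, v i ∈ Submodule.span R (S i)) : f v ∈ P := by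
  classical
  cases nonempty_fintype ι
  suffices key : ∀ T : Finset ι, ∀ v : ∀ i, M₁ i, (∀ i ∈ T, v i ∈ Submodule.span R (S i)) →
      (∀ i ∉ T, v i ∈ S i) → f v ∈ P from
    key univ v (fun i _ => hv i) (fun i hi => absurd (mem_univ i) hi)
  intro T
  induction T using Finset.induction_on with
  | empty => exact fun v _ hvS => h v fun i => hvS i (notMem_empty i)
  | insert a T ha ih =>
    intro v hvT hvS
    have hS : S a ⊆ P.comap (f.toLinearMap v a) := fun x hx => by
      refine ih (update v a x) (fun i hi => ?_) (fun i hi => ?_)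
      · rw [update_of_ne (ne_of_mem_of_not_mem hi ha)]
        exact hvT i (mem_insert_of_mem hi)
      · by_cases hia : i = a
        · subst hia
          simpa using hx
        · rw [update_of_ne hia]
          exact hvS i (by simp [hia, hi])
    simpa using Submodule.span_le.mpr hS (hvT a (mem_insert_self a T))

end MultilinearMap

section Filtration

variable {A E : Type*} [CommRing A] [AddCommGroup E] [Module A E]

theorem Ideal.mul_le_of_gradedMonoid (FilA : ℤ → Ideal A) [SetLike.GradedMonoid FilA] (i j : ℤ) :
    FilA i * FilA j ≤ FilA (i + j) :=
  Ideal.mul_le.mpr fun _ ha _ hb => SetLike.mul_mem_graded ha hb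

theorem Ideal.eq_top_of_gradedMonoid (FilA : ℤ → Ideal A) [SetLike.GradedMonoid FilA] :
    FilA 0 = ⊤ :=
  (Ideal.eq_top_iff_one _).mpr SetLike.GradedOne.one_mem

def sumFiltration (FilA : ℤ → Ideal A) (V W : Submodule A E) (i : ℤ) : Submodule A E :=
  FilA (i + 1) • V ⊔ FilA i • W

def exteriorPowerFiltration (F : ℤ → Submodule A E) (q : ℕ) (s : ℤ) :
    Submodule A (⋀[A]^q E) :=
  Submodule.span A { z : ⋀[A]^q E | ∃ (ind : Fin q → ℤ) (v : Fin q → E),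
    (∑ k, ind k) = s ∧ (∀ k, v k ∈ F (ind k)) ∧
    (z : ExteriorAlgebra A E) = ExteriorAlgebra.ιMulti A q v }

section SumFiltration

-- `SetLike.GradedMonoid FilA` says `1 ∈ FilA 0` and `FilA i * FilA j ⊆ FilA (i + j)`.
variable (FilA : ℤ → Ideal A) [SetLike.GradedMonoid FilA] (V W : Submodule A E)

theorem smul_sumFiltration_le (j i : ℤ) :
    FilA j • sumFiltration FilA V W i ≤ sumFiltration FilA V W (i + j) := by
  rw [sumFiltration, sumFiltration, Submodule.smul_sup, ← Submodule.smul_assoc,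
    ← Submodule.smul_assoc, Ideal.smul_eq_mul, Ideal.smul_eq_mul]
  refine sup_le_sup (Submodule.smul_mono_left ?_) (Submodule.smul_mono_left ?_)
  · exact (Ideal.mul_le_of_gradedMonoid FilA j (i + 1)).trans_eq (congrArg FilA (by ring))
  · exact (Ideal.mul_le_of_gradedMonoid FilA j i).trans_eq (congrArg FilA (by ring))

theorem le_sumFiltration_neg_one : V ≤ sumFiltration FilA V W (-1) :=
  le_sup_of_le_left (by simp [Ideal.eq_top_of_gradedMonoid FilA])

theorem le_sumFiltration_zero : W ≤ sumFiltration FilA V W 0 :=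
  le_sup_of_le_right (by simp [Ideal.eq_top_of_gradedMonoid FilA])

end SumFiltration

theorem ιMulti_mem_exteriorPowerFiltration {F : ℤ → Submodule A E} {q : ℕ}
    {ind : Fin q → ℤ} {v : Fin q → E} (hv : ∀ k, v k ∈ F (ind k)) :
    exteriorPower.ιMulti A q v ∈ exteriorPowerFiltration F q (∑ k, ind k) :=
  Submodule.subset_span ⟨ind, v, rfl, hv, rfl⟩

theorem exteriorPowerFiltration_le {F : ℤ → Submodule A E} {q : ℕ} {s : ℤ}
    {P : Submodule A (⋀[A]^q E)}
    (h : ∀ (ind : Fin q → ℤ) (v : Fin q → E), ∑ k, ind k = s → (∀ k, v k ∈ F (ind k)) →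
      exteriorPower.ιMulti A q v ∈ P) :
    exteriorPowerFiltration F q s ≤ P := by
  refine Submodule.span_le.mpr ?_
  rintro z ⟨ind, v, hs, hv, hz⟩
  obtain rfl : z = exteriorPower.ιMulti A q v := Subtype.ext hz
  exact h ind v hs hv

theorem smul_exteriorPowerFiltration_le {F : ℤ → Submodule A E} {q : ℕ} (hq : 0 < q)
    {I : Ideal A} {j : ℤ} (hI : ∀ i, I • F i ≤ F (i + j)) (s : ℤ) :
    I • exteriorPowerFiltration F q s ≤ exteriorPowerFiltration F q (s + j) := by
  classical
  refine Submodule.smul_le.mpr fun a ha z hz => ?_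
  suffices exteriorPowerFiltration F q s ≤
      (exteriorPowerFiltration F q (s + j)).comap (LinearMap.lsmul A _ a) from this hz
  refine exteriorPowerFiltration_le fun ind v hs hv => ?_
  let k₀ : Fin q := ⟨0, hq⟩
  have hmem := ιMulti_mem_exteriorPowerFiltration (ind := update ind k₀ (ind k₀ + j))
    (v := update v k₀ (a • v k₀)) fun k => by
      by_cases hk : k = k₀
      · subst hk
        simpa using hI _ (Submodule.smul_mem_smul ha (hv k₀))
      · simpa [hk] using hv k
  have hsum : ∑ k, update ind k₀ (ind k₀ + j) k = s + j := by
    rw [sum_update_of_mem (mem_univ k₀), ← hs,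
      sum_eq_add_sum_sdiff_singleton_of_mem (mem_univ k₀) ind]
    ring
  rw [hsum, AlternatingMap.map_update_smul, update_eq_self] at hmem
  exact hmem

end Filtration

section Generation

variable {A E : Type*} [CommRing A] [AddCommGroup E] [Module A E]
  {FilA : ℤ → Ideal A} {V : Submodule A E} {q' : ℕ} (w : Fin q' → E)

theorem sumFiltration_le_span (i : ℤ) :
    sumFiltration FilA V (Submodule.span A (Set.range w)) i ≤ Submodule.span A
      {y | ∃ (a : A) (x : E), y = a • x ∧
        (a ∈ FilA (i + 1) ∧ x ∈ V ∨ a ∈ FilA i ∧ x ∈ Set.range w)} := by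
  set G := {y | ∃ (a : A) (x : E), y = a • x ∧
    (a ∈ FilA (i + 1) ∧ x ∈ V ∨ a ∈ FilA i ∧ x ∈ Set.range w)}
  refine sup_le
    (Submodule.smul_le.mpr fun a ha x hx => Submodule.subset_span ⟨a, x, rfl, .inl ⟨ha, hx⟩⟩)
    (Submodule.smul_le.mpr fun a ha y hy => ?_)
  suffices Submodule.span A (Set.range w) ≤ (Submodule.span A G).comap (LinearMap.lsmul A E a) from
    this hy
  rw [Submodule.span_le]
  rintro _ ⟨m, rfl⟩
  exact Submodule.subset_span ⟨a, w m, rfl, .inr ⟨ha, m, rfl⟩⟩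

variable [SetLike.GradedMonoid FilA]

theorem smul_ιMulti_mem_iSup {q : ℕ} (ind : Fin q → ℤ) (S : Finset (Fin q)) (a : Fin q → A)
    (x : Fin q → E) (hS : ∀ k ∈ S, a k ∈ FilA (ind k + 1) ∧ x k ∈ V)
    (hSc : ∀ k ∉ S, a k ∈ FilA (ind k) ∧ x k ∈ Set.range w) :
    exteriorPower.ιMulti A q (fun k => a k • x k) ∈
      ⨆ j ∈ Icc (∑ k, ind k + q - q') (∑ k, ind k + q), FilA j •
        exteriorPowerFiltration (sumFiltration FilA V (Submodule.span A (Set.range w))) q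
          (∑ k, ind k - j) := by
  classical
  rw [AlternatingMap.map_smul_univ]
  by_cases hcard : #Sᶜ ≤ q'
  · have hprod : ∏ k, a k ∈ FilA (∑ k, ind k + #S) := by
      have := SetLike.prod_mem_graded FilA (fun k => ind k + if k ∈ S then 1 else 0) a
        (F := univ) fun k _ => by by_cases hk : k ∈ S <;> simp [hk, hS, hSc]
      simpa [sum_add_distrib] using this
    have hx : exteriorPower.ιMulti A q x ∈
        exteriorPowerFiltration (sumFiltration FilA V (Submodule.span A (Set.range w))) q
          (-#S) := by
      have := ιMulti_mem_exteriorPowerFiltration (ind := fun k => if k ∈ S then -1 else 0)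
        (F := sumFiltration FilA V (Submodule.span A (Set.range w))) (v := x) fun k => by
          by_cases hk : k ∈ S
          · simpa [hk] using le_sumFiltration_neg_one FilA V _ (hS k hk).2
          · simpa [hk] using
              le_sumFiltration_zero FilA V _ (Submodule.subset_span (hSc k hk).2)
      simpa using this
    have hj : ∑ k, ind k + #S ∈ Icc (∑ k, ind k + q - q') (∑ k, ind k + q) := by
      have hq : #Sᶜ + #S = q := by simp [card_compl_add_card]
      rw [mem_Icc]
      omega
    refine Submodule.mem_iSup_of_mem _ (Submodule.mem_iSup_of_mem hj ?_)
    simpa using Submodule.smul_mem_smul hprod hx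
  · have hx : ¬ Injective x := fun hinj => hcard <|
      calc #Sᶜ ≤ #(univ.image w) := card_le_card_of_injOn x
            (fun k hk => by obtain ⟨m, hm⟩ := (hSc k (mem_compl.mp hk)).2; simp [← hm]) hinj.injOn
        _ ≤ q' := card_image_le.trans (by simp)
    rw [AlternatingMap.map_eq_zero_of_not_injective _ _ hx, smul_zero]
    exact zero_mem _

theorem exteriorPowerFiltration_sumFiltration_le_iSup {q : ℕ} (s : ℤ) :
    exteriorPowerFiltration (sumFiltration FilA V (Submodule.span A (Set.range w))) q s ≤
      ⨆ j ∈ Icc (s + q - q') (s + q), FilA j •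
        exteriorPowerFiltration (sumFiltration FilA V (Submodule.span A (Set.range w))) q
          (s - j) := by
  classical
  refine exteriorPowerFiltration_le fun ind v hs hv => ?_
  subst hs
  refine (exteriorPower.ιMulti A q).toMultilinearMap.map_mem_of_forall_mem_span _ _
    (fun u hu => ?_) v fun k => sumFiltration_le_span w (ind k) (hv k)
  choose a x hux hax using hu
  obtain rfl : u = fun k => a k • x k := funext hux
  exact smul_ιMulti_mem_iSup w ind ({k | a k ∈ FilA (ind k + 1) ∧ x k ∈ V} : Finset (Fin q))
    a x (fun k hk => by simpa using hk) (fun k hk => (hax k).resolve_left (by simpa using hk))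

end Generation

open Finset in
theorem filtration_exterior_power_scalar_generation_general
    (A : Type*) [CommRing A] (FilA : ℤ → Ideal A)
    (hA_neg : ∀ i : ℤ, i ≤ 0 → FilA i = ⊤)
    (hA_mul : ∀ i j : ℤ, FilA i * FilA j ≤ FilA (i + j))
    (E : Type*) [AddCommGroup E] [Module A E]
    (V W : Submodule A E)
    (q' : ℕ) (w : Fin q' → E) (hW : W = Submodule.span A (Set.range w))
    (q : ℕ) (hq0 : 0 < q)
    (FilE : ℤ → Submodule A E)
    (hFilE : ∀ i : ℤ, FilE i = FilA (i + 1) • V ⊔ FilA i • W)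
    (FilΛ : ℤ → Submodule A (⋀[A]^q E))
    (hFilΛ : ∀ s : ℤ, FilΛ s = Submodule.span A
      { z : ⋀[A]^q E | ∃ (ind : Fin q → ℤ) (v : Fin q → E),
          (∑ k, ind k) = s ∧ (∀ k, v k ∈ FilE (ind k)) ∧
          (z : ExteriorAlgebra A E) = ExteriorAlgebra.ιMulti A q v })
    (s : ℤ) :
    FilΛ s = ⨆ j ∈ Finset.Icc (s + (q : ℤ) - (q' : ℤ)) (s + (q : ℤ)),
      FilA j • FilΛ (s - j) := by
  have : SetLike.GradedMonoid FilA :=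
    { one_mem := by simp [hA_neg 0 le_rfl]
      mul_mem := fun _ _ _ _ ha hb => hA_mul _ _ (Ideal.mul_mem_mul ha hb) }
  obtain rfl : FilE = sumFiltration FilA V W := funext hFilE
  obtain rfl : FilΛ = exteriorPowerFiltration (sumFiltration FilA V W) q := funext hFilΛ
  subst hW
  refine le_antisymm (exteriorPowerFiltration_sumFiltration_le_iSup w s) (iSup₂_le fun j _ => ?_)
  simpa using smul_exteriorPowerFiltration_le hq0 (smul_sumFiltration_le FilA V _ j) (s - j)

open Finset in
/-- Proposition 5.16 of the paper.  `A` is a commutative ring with a descending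
multiplicative `ℤ`-indexed filtration by ideals `FilA` with `FilA i = A` for
`i ≤ 0`.  `E` is an `A`-module with submodules `V`, `W` such that `V + W = E` and
`W` is generated by `q'` elements; `Fil^i E = Fil^{i+1}A • V + Fil^i A • W`.
On `Λ = ⋀^q E` (with `q > q'`), `Fil^s Λ` is the submodule generated by wedges
`v₁ ∧ ⋯ ∧ v_q` with `v_k ∈ Fil^{i_k} E` and `Σ i_k = s`.  Then for
`q' − q < s ≤ 0`:
`Fil^s Λ = Σ_{j = s+q−q'}^{s+q} (Fil^j A) • Fil^{s−j} Λ`. -/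
theorem filtration_exterior_power_scalar_generation
    (A : Type*) [CommRing A] (FilA : ℤ → Ideal A)
    (hA_anti : ∀ i j : ℤ, i ≤ j → FilA j ≤ FilA i)
    (hA_neg : ∀ i : ℤ, i ≤ 0 → FilA i = ⊤)
    (hA_mul : ∀ i j : ℤ, FilA i * FilA j ≤ FilA (i + j))
    (E : Type*) [AddCommGroup E] [Module A E]
    (V W : Submodule A E) (hVW : V ⊔ W = ⊤)
    (q' : ℕ) (w : Fin q' → E) (hW : W = Submodule.span A (Set.range w))
    (q : ℕ) (hq : q' < q) (hq0 : 0 < q)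
    (FilE : ℤ → Submodule A E)
    (hFilE : ∀ i : ℤ, FilE i = FilA (i + 1) • V ⊔ FilA i • W)
    (FilΛ : ℤ → Submodule A (⋀[A]^q E))
    (hFilΛ : ∀ s : ℤ, FilΛ s = Submodule.span A
      { z : ⋀[A]^q E | ∃ (ind : Fin q → ℤ) (v : Fin q → E),
          (∑ k, ind k) = s ∧ (∀ k, v k ∈ FilE (ind k)) ∧
          (z : ExteriorAlgebra A E) = ExteriorAlgebra.ιMulti A q v })
    (s : ℤ) (hs1 : (q' : ℤ) - (q : ℤ) < s) (hs2 : s ≤ 0) :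
    FilΛ s = ⨆ j ∈ Finset.Icc (s + (q : ℤ) - (q' : ℤ)) (s + (q : ℤ)),
      FilA j • FilΛ (s - j) :=
  filtration_exterior_power_scalar_generation_general A FilA hA_neg hA_mul E V W q' w hW q hq0 FilE
    hFilE FilΛ hFilΛ s
end
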